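/- Let G be a bipartite 3-gem, let (i,j,k) be a permutation of (1,2,3), and let {u,v} be a j-twistor of G. Then in the ji-twisting of G at {u,v}, the pair {u,v} is an i-twistor: in the twisted graph, u and v have equal parity and lie in the same {0,i}-residue and the same {j,k}-residue, and in distinct {0,j}-residues, distinct {i,k}-residues, distinct {0,k}-residues and distinct {i,j}-residues. -/

import Mathlib

/-!
We model a (3+1)-graph on a finite nonempty vertex set `V` as a quadruple
`σ : Fin 4 → Equiv.Perm V` of fixed-point-free involutions whose generated
subgroup acts transitively on `V`.
-/

/-- `f` is a fixed-point-free involution. -/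
def IsFPFInvolution {V : Type*} (f : Equiv.Perm V) : Prop :=
  (∀ x, f x ≠ x) ∧ ∀ x, f (f x) = x

/-- `x` and `y` lie in the same `I`-residue: `y` is in the orbit of `x` under the
subgroup generated by the permutations of the colors in `I`. -/
def SameResidue {V : Type*} (σ : Fin 4 → Equiv.Perm V) (I : Set (Fin 4)) (x y : V) : Prop :=
  ∃ g ∈ Subgroup.closure (σ '' I), g x = y

/-- The set of `I`-residues (orbits on `V` of the subgroup generated by the
permutations of colors in `I`). -/
def residues {V : Type*} (σ : Fin 4 → Equiv.Perm V) (I : Set (Fin 4)) : Set (Set V) :=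
  {O | ∃ x, O = {y | SameResidue σ I x y}}

/-- The number of `I`-residues. -/
noncomputable def numResidues {V : Type*} (σ : Fin 4 → Equiv.Perm V) (I : Set (Fin 4)) : ℕ :=
  (residues σ I).ncard

/-- A (3+1)-graph: four fixed-point-free involutions generating a subgroup that acts
transitively on the vertex set. -/
def IsGraph31 {V : Type*} (σ : Fin 4 → Equiv.Perm V) : Prop :=
  (∀ c, IsFPFInvolution (σ c)) ∧ ∀ x y : V, SameResidue σ Set.univ x y

/-- `b(G)`: total number of bigons (`ij`-gons over the six unordered pairs of colors). -/
noncomputable def bCount {V : Type*} (σ : Fin 4 → Equiv.Perm V) : ℕ :=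
  ∑ p ∈ Finset.univ.filter (fun p : Fin 4 × Fin 4 => p.1 < p.2),
    numResidues σ ({p.1, p.2} : Set (Fin 4))

/-- `t(G)`: total number of 3-residues over the four 3-element subsets of colors. -/
noncomputable def tCount {V : Type*} (σ : Fin 4 → Equiv.Perm V) : ℕ :=
  ∑ c : Fin 4, numResidues σ (({c}ᶜ : Set (Fin 4)))

/-- A 3-gem: a (3+1)-graph with `v(G) + t(G) = b(G)`. -/
def IsGem {V : Type*} [Fintype V] (σ : Fin 4 → Equiv.Perm V) : Prop :=
  IsGraph31 σ ∧ Fintype.card V + tCount σ = bCount σ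

/-- A crystallization: a 3-gem with no 1-dipoles, i.e. for every color `c` and vertex `x`,
the vertices `x` and `σ c x` lie in the same `({0,1,2,3} \ {c})`-residue. -/
def IsCrystallization {V : Type*} [Fintype V] (σ : Fin 4 → Equiv.Perm V) : Prop :=
  IsGem σ ∧ ∀ (c : Fin 4) (x : V), SameResidue σ (({c}ᶜ : Set (Fin 4))) x (σ c x)

/-- `{u, v}` is a `t`-twistor of the bipartite gem `σ` (with parity map `ε`), where
`a`, `b` are the other two nonzero colors: `u ≠ v` have equal parity, lie in the same
`{0,t}`-residue and the same `{a,b}`-residue, and in distinct `{0,a}`-, `{t,b}`-,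
`{0,b}`- and `{t,a}`-residues. -/
def IsTwistor {V : Type*} (σ : Fin 4 → Equiv.Perm V) (ε : V → ZMod 2)
    (t a b : Fin 4) (u v : V) : Prop :=
  u ≠ v ∧ ε u = ε v ∧
  SameResidue σ ({0, t} : Set (Fin 4)) u v ∧
  SameResidue σ ({a, b} : Set (Fin 4)) u v ∧
  ¬ SameResidue σ ({0, a} : Set (Fin 4)) u v ∧
  ¬ SameResidue σ ({t, b} : Set (Fin 4)) u v ∧
  ¬ SameResidue σ ({0, b} : Set (Fin 4)) u v ∧
  ¬ SameResidue σ ({t, a} : Set (Fin 4)) u v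

/-- The `ji`-twisting at `{u,v}`: replace `σ i` by `τ ∘ σ i ∘ τ` and `σ j` by
`τ ∘ σ j ∘ τ`, where `τ` is the transposition exchanging `u` and `v`; the other two
permutations are unchanged. -/
def jiTwisting {V : Type*} [DecidableEq V] (σ : Fin 4 → Equiv.Perm V)
    (i j : Fin 4) (u v : V) : Fin 4 → Equiv.Perm V :=
  fun c => if c = i ∨ c = j then Equiv.swap u v * σ c * Equiv.swap u v else σ c

/-!
For involutions `a`, `b` that both reverse the bipartition, an element of the group they
generate is `(a * b) ^ n` or `(a * b) ^ n * b`. Only the first kind preserves parity, so two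
vertices of equal parity lie in the same `{a, b}`-residue iff they lie in the same cycle
of `a * b`. On the parity class of `u`, twisting `b` at `{u, v}` turns `a * b` into
`a * b * swap u v`. Multiplying a permutation by the transposition `(u v)` merges the cycles
of `u` and `v` when they are distinct and splits them when they coincide. So each bigon with
exactly one twisted color (`0i`, `0j`, `ik`, `jk`) changes whether it joins `u` and `v`. The
`0k`-gons are unchanged, and the `ij`-gons are only conjugated by `(u v)`.
-/

theorem Subgroup.exists_zpow_of_mem_closure_pair_of_mul_self {G : Type*} [Group G] {a b : G}
    (ha : a * a = 1) (hb : b * b = 1) {p : G} (hp : p ∈ Subgroup.closure {a, b}) :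
    ∃ n : ℤ, p = (a * b) ^ n ∨ p = (a * b) ^ n * b := by
  have hb' : b⁻¹ = b := inv_eq_of_mul_eq_one_right hb
  have hflip : ∀ n : ℤ, b * (a * b) ^ n = (a * b) ^ (-n) * b := by
    intro n
    have hconj : b * (a * b) * b⁻¹ = (a * b)⁻¹ := by
      rw [mul_inv_rev, hb', inv_eq_of_mul_eq_one_right ha, mul_assoc, mul_assoc, hb, mul_one]
    rw [zpow_neg, ← inv_zpow, ← hconj, conj_zpow, mul_assoc, hb', hb, mul_one]
  induction hp using Subgroup.closure_induction with
  | mem q hq =>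
    rcases hq with rfl | rfl
    · exact ⟨1, Or.inr (by rw [zpow_one, mul_assoc, hb, mul_one])⟩
    · exact ⟨0, Or.inr (by rw [zpow_zero, one_mul])⟩
  | one => exact ⟨0, Or.inl (zpow_zero _).symm⟩
  | mul p q _ _ ihp ihq =>
    obtain ⟨m, rfl | rfl⟩ := ihp <;> obtain ⟨n, rfl | rfl⟩ := ihq
    · exact ⟨m + n, Or.inl (zpow_add _ _ _).symm⟩
    · exact ⟨m + n, Or.inr (by rw [zpow_add, mul_assoc])⟩
    · exact ⟨m + -n, Or.inr (by rw [zpow_add, mul_assoc, hflip, mul_assoc])⟩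
    · refine ⟨m + -n, Or.inl ?_⟩
      rw [zpow_add, mul_assoc, ← mul_assoc b, hflip, mul_assoc, hb, mul_one]
  | inv p _ ihp =>
    obtain ⟨n, rfl | rfl⟩ := ihp
    · exact ⟨-n, Or.inl (zpow_neg _ _).symm⟩
    · refine ⟨n, Or.inr ?_⟩
      rw [mul_inv_rev, hb', ← zpow_neg, hflip, neg_neg]

namespace Equiv.Perm

variable {α : Type*}

theorem pow_apply_eq_pow_apply_of_forall_lt {f g : Perm α} {z : α} {n : ℕ}
    (h : ∀ k < n, g ((f ^ k) z) = f ((f ^ k) z)) : (g ^ n) z = (f ^ n) z := by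
  induction n with
  | zero => rfl
  | succ n ih =>
    rw [pow_succ', mul_apply, ih fun k hk => h k (by omega), h n (by omega), ← mul_apply,
      ← pow_succ']

theorem sameCycle_of_pow_apply_eq {f : Perm α} {x y : α} {n : ℕ} (h : (f ^ n) x = y) :
    SameCycle f x y :=
  ⟨n, by rwa [zpow_natCast]⟩

theorem pow_apply_eq_pow_mod_apply {f : Perm α} {z : α} {m : ℕ} (hz : (f ^ m) z = z) (j : ℕ) :
    (f ^ j) z = (f ^ (j % m)) z := by
  conv_lhs => rw [← Nat.mod_add_div j m, pow_add, pow_mul, mul_apply,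
    pow_apply_eq_self_of_apply_eq_self hz]

theorem not_sameCycle_of_pow_succ_apply_eq_self [Finite α] {f : Perm α} {z w : α} {n : ℕ}
    (hz : (f ^ (n + 1)) z = z) (hw : ∀ r < n + 1, (f ^ r) z ≠ w) : ¬ SameCycle f z w := by
  intro h
  obtain ⟨j, hj⟩ := h.exists_nat_pow_eq
  rw [pow_apply_eq_pow_mod_apply hz] at hj
  exact hw _ (Nat.mod_lt _ n.succ_pos) hj

theorem sameCycle_iff_of_eqOn [Finite α] {f g : Perm α} {S : Set α} (hg : Set.MapsTo g S S)
    (hfg : Set.EqOn f g S) {x y : α} (hx : x ∈ S) : SameCycle f x y ↔ SameCycle g x y := by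
  have hpow : ∀ n : ℕ, (f ^ n) x = (g ^ n) x := fun n =>
    pow_apply_eq_pow_apply_of_forall_lt fun k _ =>
      hfg (by rw [coe_pow]; exact hg.iterate k hx)
  constructor <;> intro h <;> obtain ⟨n, rfl⟩ := h.exists_nat_pow_eq
  · exact sameCycle_of_pow_apply_eq (hpow n).symm
  · exact sameCycle_of_pow_apply_eq (hpow n)

variable [DecidableEq α]

theorem mul_swap_pow_succ_apply_left {f : Perm α} {x y : α} {n : ℕ}
    (h : ∀ k < n, (f ^ k) (f y) ≠ x ∧ (f ^ k) (f y) ≠ y) :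
    ((f * swap x y) ^ (n + 1)) x = (f ^ n) (f y) := by
  rw [pow_succ, mul_apply, mul_apply, swap_apply_left]
  refine pow_apply_eq_pow_apply_of_forall_lt fun k hk => ?_
  rw [mul_apply, swap_apply_of_ne_of_ne (h k hk).1 (h k hk).2]

theorem sameCycle_mul_swap_iff [Finite α] {f : Perm α} {x y : α} (hxy : x ≠ y) :
    SameCycle (f * swap x y) x y ↔ ¬ SameCycle f x y := by
  -- Follow `f` from `f y` until it first hits `x` or `y`; `f * swap x y` walks the same path
  -- from `x`, so whichever is hit first closes a cycle of `f` or of `f * swap x y` avoiding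
  -- the other point.
  have hex : ∃ n, (f ^ n) (f y) = x ∨ (f ^ n) (f y) = y := by
    obtain ⟨n, hn⟩ := (sameCycle_apply_left.2 (SameCycle.refl f y)).exists_nat_pow_eq
    exact ⟨n, Or.inr hn⟩
  set n := Nat.find hex
  have hbefore : ∀ k < n, (f ^ k) (f y) ≠ x ∧ (f ^ k) (f y) ≠ y := fun k hk =>
    not_or.1 (Nat.find_min hex hk)
  have hwalk := mul_swap_pow_succ_apply_left hbefore
  rcases Nat.find_spec hex with hx | hy
  · refine iff_of_false (not_sameCycle_of_pow_succ_apply_eq_self (hwalk.trans hx) ?_)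
      (not_not.2 (sameCycle_of_pow_apply_eq (n := n + 1) hx).symm)
    rintro (_ | r) hr
    · exact hxy
    · rw [mul_swap_pow_succ_apply_left fun k hk => hbefore k (by omega)]
      exact (hbefore r (by omega)).2
  · refine iff_of_true (sameCycle_of_pow_apply_eq (hwalk.trans hy)) fun hf => ?_
    refine not_sameCycle_of_pow_succ_apply_eq_self (z := y) (w := x) hy ?_ hf.symm
    rintro (_ | r) hr
    · exact hxy.symm
    · rw [pow_succ, mul_apply]
      exact (hbefore r (by omega)).1

theorem sameCycle_conj_swap_mul_conj_swap_iff (a b : Perm α) {u v : α} :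
    SameCycle (swap u v * a * swap u v * (swap u v * b * swap u v)) u v ↔
      SameCycle (a * b) u v := by
  have hmul : swap u v * a * swap u v * (swap u v * b * swap u v) =
      swap u v * (a * b) * (swap u v)⁻¹ := by
    simp only [swap_inv, mul_assoc, swap_mul_self_mul]
  rw [hmul, sameCycle_conj, swap_inv, swap_apply_left, swap_apply_right]
  exact sameCycle_comm

end Equiv.Perm

theorem ZMod.eq_of_ne_of_ne_of_two {p q r : ZMod 2} (hpq : p ≠ q) (hqr : q ≠ r) : p = r := by
  revert p q r; decide

section Bipartite

open Equiv Equiv.Perm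

variable {V : Type*} {ε : V → ZMod 2}

theorem parity_mul_apply {a b : Perm V} (ha : ∀ x, ε (a x) ≠ ε x) (hb : ∀ x, ε (b x) ≠ ε x)
    (x : V) : ε ((a * b) x) = ε x :=
  ZMod.eq_of_ne_of_ne_of_two (ha (b x)) (hb x)

theorem parity_zpow_apply {g : Perm V} (hg : ∀ x, ε (g x) = ε x) (n : ℤ) (x : V) :
    ε ((g ^ n) x) = ε x := by
  induction n using Int.induction_on generalizing x with
  | zero => rfl
  | succ n ih => rw [zpow_add_one, mul_apply, ih, hg]
  | pred n ih =>
    rw [zpow_sub_one, mul_apply, ih]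
    simpa using (hg (g⁻¹ x)).symm

theorem parity_swap_apply [DecidableEq V] {u v : V} (huv : ε u = ε v) (x : V) :
    ε (swap u v x) = ε x := by
  rw [swap_apply_def]
  split_ifs <;> simp_all

theorem sameResidue_pair_iff_sameCycle {σ : Fin 4 → Perm V} {c d : Fin 4}
    (hc : σ c * σ c = 1) (hd : σ d * σ d = 1)
    (hεc : ∀ x, ε (σ c x) ≠ ε x) (hεd : ∀ x, ε (σ d x) ≠ ε x) {x y : V} (hxy : ε x = ε y) :
    SameResidue σ {c, d} x y ↔ SameCycle (σ c * σ d) x y := by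
  rw [SameResidue, Set.image_pair]
  constructor
  · rintro ⟨p, hp, rfl⟩
    obtain ⟨n, rfl | rfl⟩ := Subgroup.exists_zpow_of_mem_closure_pair_of_mul_self hc hd hp
    · exact ⟨n, rfl⟩
    · refine absurd ?_ (hεd x)
      rw [hxy, mul_apply, parity_zpow_apply (parity_mul_apply hεc hεd)]
  · rintro ⟨n, rfl⟩
    exact ⟨_, zpow_mem (mul_mem (Subgroup.subset_closure (by simp))
      (Subgroup.subset_closure (by simp))) n, rfl⟩

theorem sameCycle_mul_conj_swap_iff [DecidableEq V] [Finite V] {a b : Perm V}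
    (ha : ∀ x, ε (a x) ≠ ε x) (hb : ∀ x, ε (b x) ≠ ε x) {u v : V} (huv : ε u = ε v)
    (hne : u ≠ v) :
    SameCycle (a * (swap u v * b * swap u v)) u v ↔ ¬ SameCycle (a * b) u v := by
  rw [← sameCycle_mul_swap_iff hne]
  refine sameCycle_iff_of_eqOn (S := {z | ε z = ε u}) (fun z hz => ?_) (fun z hz => ?_) rfl
  · rw [Set.mem_ofPred_eq, mul_apply, parity_mul_apply ha hb, parity_swap_apply huv]
    exact hz
  · -- `b` leaves the parity class of `u` and `v`, so the outer `swap u v` acts trivially.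
    have hbz := hb (swap u v z)
    rw [parity_swap_apply huv, show ε z = ε u from hz] at hbz
    simp only [mul_apply]
    rw [swap_apply_of_ne_of_ne (fun h => hbz (by rw [h])) (fun h => hbz (by rw [h, huv]))]

end Bipartite

section JiTwisting

open Equiv

variable {V : Type*} [DecidableEq V] (σ : Fin 4 → Perm V) {i j : Fin 4} (u v : V)

theorem jiTwisting_left : jiTwisting σ i j u v i = swap u v * σ i * swap u v :=
  if_pos (Or.inl rfl)

theorem jiTwisting_right : jiTwisting σ i j u v j = swap u v * σ j * swap u v :=
  if_pos (Or.inr rfl)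

theorem jiTwisting_of_ne {c : Fin 4} (hi : c ≠ i) (hj : c ≠ j) : jiTwisting σ i j u v c = σ c :=
  if_neg (by tauto)

variable {σ u v}

theorem jiTwisting_mul_self {c : Fin 4} (h : σ c * σ c = 1) :
    jiTwisting σ i j u v c * jiTwisting σ i j u v c = 1 := by
  unfold jiTwisting
  split_ifs
  · simp only [mul_assoc, swap_mul_self_mul, ← mul_assoc (σ c), h, one_mul, swap_mul_self]
  · exact h

theorem jiTwisting_parity {ε : V → ZMod 2} {c : Fin 4} (h : ∀ x, ε (σ c x) ≠ ε x)
    (huv : ε u = ε v) (x : V) : ε (jiTwisting σ i j u v c x) ≠ ε x := by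
  unfold jiTwisting
  split_ifs
  · simp only [Perm.mul_apply, parity_swap_apply huv]
    rw [← parity_swap_apply huv x]
    exact h _
  · exact h x

end JiTwisting

theorem jiTwisting_isTwistor_general {V : Type*} [Fintype V] [DecidableEq V]
    (σ : Fin 4 → Equiv.Perm V) (ε : V → ZMod 2)
    (hgem : IsGem σ) (hbip : ∀ (c : Fin 4) (x : V), ε (σ c x) ≠ ε x)
    (i j k : Fin 4) (hperm : ({i, j, k} : Finset (Fin 4)) = ({1, 2, 3} : Finset (Fin 4)))
    (u v : V) (htw : IsTwistor σ ε j i k u v) :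
    IsTwistor (jiTwisting σ i j u v) ε i j k u v := by
  obtain ⟨huv, hεuv, hs0j, hsik, hn0i, hnjk, hn0k, hnji⟩ := htw
  have hcolors : ∀ i j k : Fin 4, ({i, j, k} : Finset (Fin 4)) = {1, 2, 3} →
      i ≠ 0 ∧ j ≠ 0 ∧ i ≠ k ∧ j ≠ k := by decide
  obtain ⟨hi0, hj0, hik, hjk⟩ := hcolors i j k hperm
  have hinv (c : Fin 4) : σ c * σ c = 1 := Equiv.ext (hgem.1.1 c).2
  have res (c d : Fin 4) :=
    sameResidue_pair_iff_sameCycle (hinv c) (hinv d) (hbip c) (hbip d) hεuv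
  have res' (c d : Fin 4) := sameResidue_pair_iff_sameCycle (σ := jiTwisting σ i j u v)
    (jiTwisting_mul_self (hinv c)) (jiTwisting_mul_self (hinv d))
    (jiTwisting_parity (hbip c) hεuv) (jiTwisting_parity (hbip d) hεuv) hεuv
  have twist (c d : Fin 4) := sameCycle_mul_conj_swap_iff (hbip c) (hbip d) hεuv huv
  have h0 := jiTwisting_of_ne σ u v hi0.symm hj0.symm
  have hk := jiTwisting_of_ne σ u v hik.symm hjk.symm
  refine ⟨huv, hεuv, ?_, ?_, ?_, ?_, ?_, ?_⟩
  · rwa [res', h0, jiTwisting_left, twist, ← res]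
  · rwa [Set.pair_comm, res', hk, jiTwisting_right, twist, ← res, Set.pair_comm]
  · rwa [res', h0, jiTwisting_right, twist, not_not, ← res]
  · rwa [Set.pair_comm, res', hk, jiTwisting_left, twist, not_not, ← res, Set.pair_comm]
  · rwa [res', h0, hk, ← res]
  · rwa [res', jiTwisting_left, jiTwisting_right,
      Equiv.Perm.sameCycle_conj_swap_mul_conj_swap_iff, ← res, Set.pair_comm]

/-- Let `G` be a bipartite 3-gem, `(i,j,k)` a permutation of `(1,2,3)`,
and `{u,v}` a `j`-twistor of `G`. Then in the `ji`-twisting of `G` at `{u,v}`, the pair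
`{u,v}` is an `i`-twistor: in the twisted graph, `u` and `v` have equal parity, lie in
the same `{0,i}`-residue and the same `{j,k}`-residue, and in distinct `{0,j}`-,
`{i,k}`-, `{0,k}`- and `{i,j}`-residues. -/
theorem jiTwisting_isTwistor {V : Type*} [Fintype V] [DecidableEq V] [Nonempty V]
    (σ : Fin 4 → Equiv.Perm V) (ε : V → ZMod 2)
    (hgem : IsGem σ) (hbip : ∀ (c : Fin 4) (x : V), ε (σ c x) ≠ ε x)
    (i j k : Fin 4) (hperm : ({i, j, k} : Finset (Fin 4)) = ({1, 2, 3} : Finset (Fin 4)))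
    (u v : V) (htw : IsTwistor σ ε j i k u v) :
    IsTwistor (jiTwisting σ i j u v) ε i j k u v :=
  jiTwisting_isTwistor_general σ ε hgem hbip i j k hperm u v htw
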